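/- arXiv:2506.13221 — 4 statements merged into one kernel-verified Lean document; each statement's English description precedes it below -/
import Mathlib

section
/- Let f : ℝⁿ → ℝⁿ and let F : ℝⁿ × ℝⁿ → ℝⁿ satisfy the Lipschitz estimate ‖F(a,b) − F(a',b')‖ ≤ L(‖a − a'‖ + ‖b − b'‖) for all a,a',b,b' and the consistency condition F(p,p) = f(p) for all p. Let τ, h > 0 and let (uⱼ)_{j∈ℤ} be a family of vectors in ℝⁿ such that uⱼ = 0 for all but finitely many j. Define the updated values wⱼ := uⱼ − (τ/h)(F(uⱼ, u_{j+1}) − F(u_{j−1}, uⱼ)). Then Σ_{j∈ℤ} h‖wⱼ − uⱼ‖ ≤ 2Lτ Σ_{j∈ℤ} ‖u_{j+1} − uⱼ‖. -/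
/-! By the Lipschitz bound on `F`, the flux difference across cell `j` is at most `L` times the
two jumps `‖u j - u (j - 1)‖` and `‖u (j + 1) - u j‖` at its edges; summing over `j` counts
every jump twice. -/

lemma Function.HasFiniteSupport.summable_norm_sub_add_one {E : Type*} [NormedAddCommGroup E]
    {u : ℤ → E} (hu : u.HasFiniteSupport) :
    Summable fun j => ‖u (j + 1) - u j‖ := by
  have hshift : (fun j => u (j + 1)).HasFiniteSupport :=
    hu.fun_comp_of_injective (add_left_injective 1)
  exact summable_of_hasFiniteSupport ((hshift.sub hu).fun_comp norm_zero)

lemma tsum_le_two_mul_tsum_of_le_add_sub_one {a d : ℤ → ℝ} {C : ℝ} (ha : ∀ j, 0 ≤ a j)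
    (hd : Summable d) (had : ∀ j, a j ≤ C * (d (j - 1) + d j)) :
    ∑' j, a j ≤ 2 * C * ∑' j, d j := by
  have hd_sub : Summable fun j => d (j - 1) := (Equiv.subRight (1 : ℤ)).summable_iff.mpr hd
  have hbound : Summable fun j => C * (d (j - 1) + d j) := (hd_sub.add hd).mul_left C
  have hshift : ∑' j, d (j - 1) = ∑' j, d j := (Equiv.subRight (1 : ℤ)).tsum_eq d
  calc ∑' j, a j ≤ ∑' j, C * (d (j - 1) + d j) :=
        (Summable.of_nonneg_of_le ha had hbound).tsum_le_tsum had hbound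
    _ = C * (∑' j, d (j - 1) + ∑' j, d j) := by rw [tsum_mul_left, hd_sub.tsum_add hd]
    _ = 2 * C * ∑' j, d j := by rw [hshift]; ring

lemma mul_norm_smul_flux_sub_le {E : Type*} [NormedAddCommGroup E] [NormedSpace ℝ E]
    {F : E → E → E} {L : ℝ} (hLip : ∀ a a' b b', ‖F a b - F a' b'‖ ≤ L * (‖a - a'‖ + ‖b - b'‖))
    {τ h : ℝ} (hτ : 0 ≤ τ) (hh : 0 < h) (a b c : E) :
    h * ‖(τ / h) • (F b c - F a b)‖ ≤ L * τ * (‖b - a‖ + ‖c - b‖) := by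
  have hflux : ‖F b c - F a b‖ ≤ L * (‖b - a‖ + ‖c - b‖) := hLip b a c b
  calc h * ‖(τ / h) • (F b c - F a b)‖ = τ * ‖F b c - F a b‖ := by
        rw [norm_smul, Real.norm_of_nonneg (div_nonneg hτ hh.le)]
        field_simp
    _ ≤ τ * (L * (‖b - a‖ + ‖c - b‖)) := mul_le_mul_of_nonneg_left hflux hτ
    _ = L * τ * (‖b - a‖ + ‖c - b‖) := by ring

theorem stmt1_general (n : ℕ)
    (F : EuclideanSpace ℝ (Fin n) → EuclideanSpace ℝ (Fin n) → EuclideanSpace ℝ (Fin n))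
    (L : ℝ)
    (hLip : ∀ a a' b b', ‖F a b - F a' b'‖ ≤ L * (‖a - a'‖ + ‖b - b'‖))
    (τ h : ℝ) (hτ : 0 < τ) (hh : 0 < h)
    (u : ℤ → EuclideanSpace ℝ (Fin n))
    (hfin : (Function.support u).Finite)
    (w : ℤ → EuclideanSpace ℝ (Fin n))
    (hw : ∀ j, w j = u j - (τ / h) • (F (u j) (u (j + 1)) - F (u (j - 1)) (u j))) :
    ∑' j : ℤ, h * ‖w j - u j‖ ≤ 2 * L * τ * ∑' j : ℤ, ‖u (j + 1) - u j‖ := by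
  have hlocal : ∀ j, h * ‖w j - u j‖ ≤
      L * τ * (‖u (j - 1 + 1) - u (j - 1)‖ + ‖u (j + 1) - u j‖) := by
    intro j
    rw [hw j, sub_sub_cancel_left, norm_neg, sub_add_cancel]
    exact mul_norm_smul_flux_sub_le hLip hτ.le hh _ _ _
  have hsum := tsum_le_two_mul_tsum_of_le_add_sub_one
    (fun j => mul_nonneg hh.le (norm_nonneg _))
    (show u.HasFiniteSupport from hfin).summable_norm_sub_add_one hlocal
  rwa [mul_assoc 2 L τ]

/-- one-step Lipschitz-continuity-in-time estimate for the explicit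
finite volume scheme with a consistent Lipschitz numerical flux. -/
theorem stmt1 (n : ℕ)
    (f : EuclideanSpace ℝ (Fin n) → EuclideanSpace ℝ (Fin n))
    (F : EuclideanSpace ℝ (Fin n) → EuclideanSpace ℝ (Fin n) → EuclideanSpace ℝ (Fin n))
    (L : ℝ)
    (hLip : ∀ a a' b b', ‖F a b - F a' b'‖ ≤ L * (‖a - a'‖ + ‖b - b'‖))
    (hcons : ∀ p, F p p = f p)
    (τ h : ℝ) (hτ : 0 < τ) (hh : 0 < h)
    (u : ℤ → EuclideanSpace ℝ (Fin n))
    (hfin : (Function.support u).Finite)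
    (w : ℤ → EuclideanSpace ℝ (Fin n))
    (hw : ∀ j, w j = u j - (τ / h) • (F (u j) (u (j + 1)) - F (u (j - 1)) (u j))) :
    ∑' j : ℤ, h * ‖w j - u j‖ ≤ 2 * L * τ * ∑' j : ℤ, ‖u (j + 1) - u j‖ :=
  stmt1_general n F L hLip τ h hτ hh u hfin w hw
end

section
/- Let f : ℝⁿ → ℝⁿ and let F : ℝⁿ × ℝⁿ → ℝⁿ satisfy ‖F(a,b) − F(a',b')‖ ≤ L(‖a−a'‖ + ‖b−b'‖) for all arguments and F(p,p) = f(p) for all p. Let τ, h > 0 with τ ≤ h, fix tⁿ ∈ ℝ and set t^{n+1} := tⁿ + τ, and let the grid be x_{j+1/2} = jh with cells I_j = (x_{j−1/2}, x_{j+1/2}). Let (uⱼ)_{j∈ℤ} ⊂ ℝⁿ vanish for all but finitely many j, define u : ℝ → ℝⁿ by u(x) = uⱼ for x ∈ I_j, and define the updated grid function u' : ℝ → ℝⁿ by u'(x) = uⱼ − (τ/h)(F(uⱼ,u_{j+1}) − F(u_{j−1},uⱼ)) for x ∈ I_j. Then there is a constant C depending only on L such that for every continuously differentiable compactly supported φ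 : ℝ × ℝ → ℝ, ‖∫_{tⁿ}^{t^{n+1}} ∫_ℝ (∂ₜφ(t,x) u(x) + ∂ₓφ(t,x) f(u(x))) dx dt − ∫_ℝ (φ(t^{n+1},x) u'(x) − φ(tⁿ,x) u(x)) dx‖ ≤ C h ‖φ‖_{W^{1,∞}(ℝ²)} τ Σ_{j∈ℤ} ‖u_{j+1} − uⱼ‖. -/
/-!
Everything reduces to finite sums over cells. Since `u` is constant on cells, Fubini and the
fundamental theorem of calculus turn the space-time integral into
`∑ⱼ (∫_{I_j} φ(tⁿ⁺¹) - φ(tⁿ)) uⱼ + (bⱼ - bⱼ₋₁) f(uⱼ)`, where `bⱼ` is the time integral of `φ` at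
the interface `x_{j+1/2}`, while the update contributes `∑ⱼ aⱼ (F_{j+1/2} - F_{j-1/2})` with
`aⱼ = (τ/h) ∫_{I_j} φ(tⁿ⁺¹)`. Summation by parts and consistency `F(p,p) = f(p)` rewrite the
difference as `∑ⱼ (aⱼ - bⱼ)(F_{j+1/2} - f(uⱼ)) + (aⱼ₊₁ - bⱼ)(f(uⱼ₊₁) - F_{j+1/2})`. Each
coefficient compares a cell average of `φ(tⁿ⁺¹, ·)` with a time average of `φ(·, x_{j+1/2})` at an
endpoint of that cell, so it is `O(M h τ)` because `τ ≤ h`; each flux difference is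
`O(L ‖uⱼ₊₁ - uⱼ‖)` by the Lipschitz bound.
-/

open MeasureTheory Set Interval

/-- The cell `I_j = (x_{j-1/2}, x_{j+1/2})` of the grid `x_{j+1/2} = j h`. -/
def cell (h : ℝ) (j : ℤ) : Set ℝ := Ioo (((j : ℝ) - 1) * h) ((j : ℝ) * h)

theorem eq_of_mem_cell {h : ℝ} (hh : 0 < h) {i j : ℤ} {x : ℝ} (hi : x ∈ cell h i)
    (hj : x ∈ cell h j) : i = j := by
  have h₁ : ((i : ℝ) - 1) < j := lt_of_mul_lt_mul_right (hi.1.trans hj.2) hh.le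
  have h₂ : ((j : ℝ) - 1) < i := lt_of_mul_lt_mul_right (hj.1.trans hi.2) hh.le
  have : i - 1 < j := by exact_mod_cast h₁
  have : j - 1 < i := by exact_mod_cast h₂
  omega

theorem ae_exists_mem_cell {h : ℝ} (hh : 0 < h) : ∀ᵐ x : ℝ, ∃ j, x ∈ cell h j := by
  have hnull : volume (range fun j : ℤ => (j : ℝ) * h) = 0 :=
    (countable_range _).measure_zero _
  filter_upwards [measure_eq_zero_iff_ae_notMem.1 hnull] with x hx
  refine ⟨⌊x / h⌋ + 1, ?_, ?_⟩
  · have hle : (⌊x / h⌋ : ℝ) * h ≤ x := (le_div_iff₀ hh).1 (Int.floor_le _)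
    have hne : (⌊x / h⌋ : ℝ) * h ≠ x := fun he => hx ⟨_, he⟩
    push_cast
    simpa using lt_of_le_of_ne hle hne
  · push_cast
    exact (div_lt_iff₀ hh).1 (Int.lt_floor_add_one _)

theorem integral_smul_eq_sum_cell {E : Type*} [NormedAddCommGroup E] [NormedSpace ℝ E]
    [CompleteSpace E] {h : ℝ} (hh : 0 < h) {K : Finset ℤ} {v : ℤ → E}
    (hv : ∀ j ∉ K, v j = 0) {ψ : ℝ → ℝ} (hψ : Continuous ψ) {g : ℝ → E}
    (hg : ∀ j, ∀ x ∈ cell h j, g x = v j) :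
    Integrable (fun x => ψ x • g x) ∧
      ∫ x, ψ x • g x = ∑ j ∈ K, (∫ x in ((j : ℝ) - 1) * h..(j : ℝ) * h, ψ x) • v j := by
  have hae : (fun x => ψ x • g x) =ᵐ[volume]
      fun x => ∑ j ∈ K, (cell h j).indicator (fun x => ψ x • v j) x := by
    filter_upwards [ae_exists_mem_cell hh] with x ⟨j, hj⟩
    rw [Finset.sum_eq_single j
      (fun i _ hij => indicator_of_notMem (fun hi => hij (eq_of_mem_cell hh hi hj)) _)
      (fun hjK => by simp [hv j hjK]), indicator_of_mem hj, hg j x hj]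
  have hint : ∀ j, Integrable ((cell h j).indicator fun x => ψ x • v j) :=
    fun j => ((hψ.smul continuous_const).integrableOn_Icc.mono_set Ioo_subset_Icc_self
      ).integrable_indicator measurableSet_Ioo
  refine ⟨(integrable_finsetSum _ fun j _ => hint j).congr hae.symm, ?_⟩
  rw [integral_congr_ae hae, integral_finsetSum _ fun j _ => hint j]
  refine Finset.sum_congr rfl fun j _ => ?_
  have hle : ((j : ℝ) - 1) * h ≤ (j : ℝ) * h := by nlinarith
  rw [cell, integral_indicator measurableSet_Ioo, integral_smul_const,
    intervalIntegral.integral_of_le hle, integral_Ioc_eq_integral_Ioo]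

theorem abs_sub_le_of_hasDerivAt {g g' : ℝ → ℝ} {M : ℝ} (hg : ∀ s, HasDerivAt g (g' s) s)
    (hM : ∀ s, |g' s| ≤ M) (a b : ℝ) : |g a - g b| ≤ M * |a - b| := by
  simpa [Real.norm_eq_abs] using convex_univ.norm_image_sub_le_of_norm_hasDerivWithin_le
    (fun s _ => (hg s).hasDerivWithinAt) (fun s _ => hM s) (mem_univ b) (mem_univ a)

theorem abs_inv_mul_integral_sub_le {g : ℝ → ℝ} {a b c ε : ℝ} (hab : a < b)
    (hg : IntervalIntegrable g volume a b) (hε : ∀ x ∈ Ι a b, |g x - c| ≤ ε) :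
    |(b - a)⁻¹ * (∫ x in a..b, g x) - c| ≤ ε := by
  have hba : 0 < b - a := sub_pos.2 hab
  have hsub : (b - a)⁻¹ * (∫ x in a..b, g x) - c = (b - a)⁻¹ * ∫ x in a..b, (g x - c) := by
    rw [intervalIntegral.integral_sub hg intervalIntegrable_const, intervalIntegral.integral_const,
      smul_eq_mul]
    field_simp
  have hint : |∫ x in a..b, (g x - c)| ≤ ε * |b - a| :=
    intervalIntegral.norm_integral_le_of_norm_le_const (f := fun x => g x - c) hε
  rw [hsub, abs_mul, abs_inv, abs_of_pos hba]
  rw [abs_of_pos hba] at hint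
  calc (b - a)⁻¹ * |∫ x in a..b, (g x - c)| ≤ (b - a)⁻¹ * (ε * (b - a)) := by gcongr
    _ = ε := by field_simp

section Partials

variable {φ : ℝ × ℝ → ℝ}

theorem hasDerivAt_partial_fst (hφ : Differentiable ℝ φ) (s x : ℝ) :
    HasDerivAt (fun s => φ (s, x)) (fderiv ℝ φ (s, x) (1, 0)) s :=
  (hφ (s, x)).hasFDerivAt.comp_hasDerivAt s ((hasDerivAt_id s).prodMk (hasDerivAt_const s x))

theorem hasDerivAt_partial_snd (hφ : Differentiable ℝ φ) (t x : ℝ) :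
    HasDerivAt (fun x => φ (t, x)) (fderiv ℝ φ (t, x) (0, 1)) x :=
  (hφ (t, x)).hasFDerivAt.comp_hasDerivAt x ((hasDerivAt_const x t).prodMk (hasDerivAt_id x))

theorem continuous_fderiv_apply_const (hφ : ContDiff ℝ 1 φ) (w : ℝ × ℝ) :
    Continuous fun p => fderiv ℝ φ p w :=
  (hφ.continuous_fderiv one_ne_zero).clm_apply continuous_const

theorem abs_sub_le_of_abs_fderiv_le (hφ : Differentiable ℝ φ) {M : ℝ}
    (hM₁ : ∀ p, |fderiv ℝ φ p (1, 0)| ≤ M) (hM₂ : ∀ p, |fderiv ℝ φ p (0, 1)| ≤ M)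
    (p q : ℝ × ℝ) : |φ p - φ q| ≤ M * (|p.1 - q.1| + |p.2 - q.2|) :=
  calc |φ p - φ q| ≤ |φ (p.1, p.2) - φ (q.1, p.2)| + |φ (q.1, p.2) - φ (q.1, q.2)| :=
        abs_sub_le _ _ _
    _ ≤ M * |p.1 - q.1| + M * |p.2 - q.2| :=
        add_le_add
          (abs_sub_le_of_hasDerivAt (hasDerivAt_partial_fst hφ · p.2) (fun _ => hM₁ _) _ _)
          (abs_sub_le_of_hasDerivAt (hasDerivAt_partial_snd hφ q.1) (fun _ => hM₂ _) _ _)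
    _ = M * (|p.1 - q.1| + |p.2 - q.2|) := (mul_add _ _ _).symm

theorem HasCompactSupport.comp_prodMk {G : Type*} [Zero G] {c : ℝ × ℝ → G}
    (hc : HasCompactSupport c) (t : ℝ) : HasCompactSupport fun x => c (t, x) :=
  hc.comp_isClosedEmbedding ⟨isEmbedding_prodMkRight t, (isClosedMap_prodMk_left t).isClosed_range⟩

theorem integrable_fderiv_snd (hφ : ContDiff ℝ 1 φ) (hc : HasCompactSupport φ) (t : ℝ) :
    Integrable fun x => fderiv ℝ φ (t, x) (0, 1) :=
  ((continuous_fderiv_apply_const hφ _).comp (continuous_const.prodMk continuous_id)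
    ).integrable_of_hasCompactSupport
    ((hc.fderiv (𝕜 := ℝ)).comp_left (g := fun l : ℝ × ℝ →L[ℝ] ℝ => l (0, 1)) rfl |>.comp_prodMk t)

theorem integral_fderiv_snd_eq_zero (hφ : ContDiff ℝ 1 φ) (hc : HasCompactSupport φ) (t : ℝ) :
    ∫ x, fderiv ℝ φ (t, x) (0, 1) = 0 :=
  integral_eq_zero_of_hasDerivAt_of_integrable
    (hasDerivAt_partial_snd (hφ.differentiable one_ne_zero) t) (integrable_fderiv_snd hφ hc t)
    ((hφ.continuous.comp (continuous_const.prodMk continuous_id)).integrable_of_hasCompactSupport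
      (hc.comp_prodMk t))

theorem integral_integral_fderiv_fst (hφ : ContDiff ℝ 1 φ) {a b c d : ℝ} (hab : a ≤ b)
    (hcd : c ≤ d) :
    ∫ t in a..b, ∫ x in c..d, fderiv ℝ φ (t, x) (1, 0) = ∫ x in c..d, (φ (b, x) - φ (a, x)) := by
  have hcont := continuous_fderiv_apply_const hφ (1, 0)
  have hint : Integrable (Function.uncurry fun t x => fderiv ℝ φ (t, x) (1, 0))
      ((volume.restrict (Ioc a b)).prod (volume.restrict (Ioc c d))) := by
    rw [Measure.prod_restrict, ← Measure.volume_eq_prod]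
    exact (hcont.continuousOn.integrableOn_compact (isCompact_Icc.prod isCompact_Icc)).mono_set
      (prod_mono Ioc_subset_Icc_self Ioc_subset_Icc_self)
  simp only [intervalIntegral.integral_of_le hab, intervalIntegral.integral_of_le hcd]
  rw [integral_integral_swap hint]
  refine integral_congr_ae (Filter.Eventually.of_forall fun x => ?_)
  dsimp only
  rw [← intervalIntegral.integral_of_le hab]
  exact intervalIntegral.integral_eq_sub_of_hasDerivAt
    (fun s _ => hasDerivAt_partial_fst (hφ.differentiable one_ne_zero) s x)
    ((hcont.comp (continuous_id.prodMk continuous_const)).intervalIntegrable a b)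

theorem abs_mul_integral_sub_integral_le (hφ : Differentiable ℝ φ) {M : ℝ}
    (hM₁ : ∀ p, |fderiv ℝ φ p (1, 0)| ≤ M) (hM₂ : ∀ p, |fderiv ℝ φ p (0, 1)| ≤ M)
    {τ h : ℝ} (hτ : 0 < τ) (hτh : τ ≤ h) {a b y : ℝ} (hba : b - a = h) (hy : y ∈ Icc a b)
    (t₀ : ℝ) :
    |(τ / h) * (∫ x in a..b, φ (t₀ + τ, x)) - ∫ t in t₀..t₀ + τ, φ (t, y)| ≤ 2 * M * h * τ := by
  have hM : 0 ≤ M := (abs_nonneg _).trans (hM₁ 0)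
  set A := ∫ x in a..b, φ (t₀ + τ, x)
  have hφt : ∀ t ∈ Ι t₀ (t₀ + τ), |h⁻¹ * A - φ (t, y)| ≤ 2 * M * h := by
    intro t ht
    rw [uIoc_of_le (by linarith)] at ht
    rw [← hba]
    refine abs_inv_mul_integral_sub_le (by linarith)
      ((hφ.continuous.comp (continuous_const.prodMk continuous_id)).intervalIntegrable a b)
      fun x hx => ?_
    rw [uIoc_of_le (by linarith)] at hx
    have ht' : |t₀ + τ - t| ≤ b - a := by rw [abs_le]; constructor <;> linarith [ht.1, ht.2]
    have hx' : |x - y| ≤ b - a := by rw [abs_le]; constructor <;> linarith [hx.1, hx.2, hy.1, hy.2]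
    calc |φ (t₀ + τ, x) - φ (t, y)| ≤ M * (|t₀ + τ - t| + |x - y|) :=
          abs_sub_le_of_abs_fderiv_le hφ hM₁ hM₂ _ _
      _ ≤ M * ((b - a) + (b - a)) := by gcongr
      _ = 2 * M * (b - a) := by ring
  have havg : |τ⁻¹ * (∫ t in t₀..t₀ + τ, φ (t, y)) - h⁻¹ * A| ≤ 2 * M * h := by
    simpa using abs_inv_mul_integral_sub_le (by linarith)
      ((hφ.continuous.comp (continuous_id.prodMk continuous_const)).intervalIntegrable _ _)
      fun t ht => (abs_sub_comm _ _).trans_le (hφt t ht)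
  calc |(τ / h) * A - ∫ t in t₀..t₀ + τ, φ (t, y)|
      = τ * |τ⁻¹ * (∫ t in t₀..t₀ + τ, φ (t, y)) - h⁻¹ * A| := by
        rw [← abs_of_pos hτ, ← abs_mul, abs_sub_comm, abs_of_pos hτ]
        congr 1
        field_simp
    _ ≤ τ * (2 * M * h) := by gcongr
    _ = 2 * M * h * τ := by ring

end Partials

theorem exists_finset_of_support_finite {E : Type*} [Zero E] {v : ℤ → E}
    (hv : (Function.support v).Finite) :
    ∃ K : Finset ℤ, ∀ j, (j ∉ K ∨ j + 1 ∉ K) → v j = 0 ∧ v (j + 1) = 0 := by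
  obtain ⟨lo, hlo⟩ := hv.bddBelow
  obtain ⟨hi, hhi⟩ := hv.bddAbove
  refine ⟨Finset.Icc (lo - 1) (hi + 1), fun j hj => ⟨?_, ?_⟩⟩ <;> by_contra hne <;>
    have := hlo hne <;> have := hhi hne <;> simp only [Finset.mem_Icc] at hj <;> omega

section Telescoping

variable {E : Type*} [AddCommGroup E]

theorem sum_sub_comp_sub_one_eq_zero (K : Finset ℤ) (H : ℤ → E)
    (hH : ∀ j, (j ∉ K ∨ j + 1 ∉ K) → H j = 0) : ∑ j ∈ K, (H j - H (j - 1)) = 0 := by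
  have hsupp : Function.support H ⊆ K := fun j hj => by
    by_contra hjK; exact hj (hH j (Or.inl hjK))
  have hsupp' : Function.support (fun j => H (j - 1)) ⊆ K := fun j hj => by
    by_contra hjK; exact hj (hH _ (Or.inr (by simpa using hjK)))
  have hshift : ∑ᶠ j, H (j - 1) = ∑ᶠ j, H j := finsum_comp_equiv (Equiv.subRight 1)
  rw [Finset.sum_sub_distrib, ← finsum_eq_sum_of_support_subset _ hsupp,
    ← finsum_eq_sum_of_support_subset _ hsupp', hshift, sub_self]

theorem sum_smul_sub_add_smul_sub_eq [Module ℝ E] (K : Finset ℤ) (a b : ℤ → ℝ) (v G : ℤ → E)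
    (hK : ∀ j, (j ∉ K ∨ j + 1 ∉ K) → v (j + 1) = 0 ∧ G j = 0) :
    ∑ j ∈ K, ((b j - b (j - 1)) • v j + a j • (G j - G (j - 1))) =
      ∑ j ∈ K, ((a j - b j) • (G j - v j) + (a (j + 1) - b j) • (v (j + 1) - G j)) := by
  have htele (H : ℤ → E) (hH : ∀ j, v (j + 1) = 0 ∧ G j = 0 → H j = 0) :
      ∑ j ∈ K, (H j - H (j - 1)) = 0 :=
    sum_sub_comp_sub_one_eq_zero K H fun j hj => hH j (hK j hj)
  rw [← sub_eq_zero, ← Finset.sum_sub_distrib]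
  calc _ = ∑ j ∈ K, (((fun i => b i • v (i + 1)) j - (fun i => b i • v (i + 1)) (j - 1))
          + ((fun i => a (i + 1) • G i) j - (fun i => a (i + 1) • G i) (j - 1))
          - ((fun i => a (i + 1) • v (i + 1)) j - (fun i => a (i + 1) • v (i + 1)) (j - 1))) :=
        Finset.sum_congr rfl fun j _ => by simp only [sub_add_cancel]; module
    _ = 0 := by
      rw [Finset.sum_sub_distrib, Finset.sum_add_distrib,
        htele _ fun j hj => by simp [hj.1], htele _ fun j hj => by simp [hj.2],
        htele _ fun j hj => by simp [hj.1], add_zero, sub_zero]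

end Telescoping

section Scheme

variable {E : Type*} [NormedAddCommGroup E] [NormedSpace ℝ E] [CompleteSpace E]
  {φ : ℝ × ℝ → ℝ} {h : ℝ} {K : Finset ℤ}

theorem integral_partials_smul_eq_sum (hφ : ContDiff ℝ 1 φ) (hc : HasCompactSupport φ)
    (hh : 0 < h) {v w : ℤ → E} {c : E} (hv : ∀ j ∉ K, v j = 0) (hw : ∀ j ∉ K, w j = c)
    {u g : ℝ → E} (hu : ∀ j, ∀ x ∈ cell h j, u x = v j) (hg : ∀ j, ∀ x ∈ cell h j, g x = w j)
    (t : ℝ) :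
    ∫ x, (fderiv ℝ φ (t, x) (1, 0) • u x + fderiv ℝ φ (t, x) (0, 1) • g x) =
      ∑ j ∈ K, ((∫ x in ((j : ℝ) - 1) * h..(j : ℝ) * h, fderiv ℝ φ (t, x) (1, 0)) • v j +
        (φ (t, (j : ℝ) * h) - φ (t, ((j : ℝ) - 1) * h)) • (w j - c)) := by
  have hslice (w : ℝ × ℝ) : Continuous fun x => fderiv ℝ φ (t, x) w :=
    (continuous_fderiv_apply_const hφ w).comp (continuous_const.prodMk continuous_id)
  obtain ⟨hint₁, heq₁⟩ := integral_smul_eq_sum_cell hh hv (hslice (1, 0)) hu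
  obtain ⟨hint₂, heq₂⟩ := integral_smul_eq_sum_cell hh (v := fun j => w j - c)
    (fun j hj => sub_eq_zero.2 (hw j hj)) (hslice (0, 1)) (g := fun x => g x - c)
    fun j x hx => by rw [hg j x hx]
  have hint₃ : Integrable fun x => fderiv ℝ φ (t, x) (0, 1) • c :=
    (integrable_fderiv_snd hφ hc t).smul_const c
  -- `g` is only constant, not zero, off the cells of `K`; the constant part `∂ₓφ • c`
  -- integrates to zero.
  have hsplit : (fun x => fderiv ℝ φ (t, x) (1, 0) • u x + fderiv ℝ φ (t, x) (0, 1) • g x) =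
      fun x => fderiv ℝ φ (t, x) (1, 0) • u x +
        (fderiv ℝ φ (t, x) (0, 1) • (g x - c) + fderiv ℝ φ (t, x) (0, 1) • c) := by
    funext x; rw [smul_sub, sub_add_cancel]
  have hint₂₃ : Integrable fun x =>
      fderiv ℝ φ (t, x) (0, 1) • (g x - c) + fderiv ℝ φ (t, x) (0, 1) • c := hint₂.add hint₃
  rw [hsplit, integral_add hint₁ hint₂₃, integral_add hint₂ hint₃,
    integral_smul_const, integral_fderiv_snd_eq_zero hφ hc t, zero_smul, add_zero, heq₁, heq₂,
    ← Finset.sum_add_distrib]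
  refine Finset.sum_congr rfl fun j _ => ?_
  rw [intervalIntegral.integral_eq_sub_of_hasDerivAt
    (fun x _ => hasDerivAt_partial_snd (hφ.differentiable one_ne_zero) t x)
    ((hslice (0, 1)).intervalIntegrable _ _)]

theorem integral_integral_partials_smul_eq_sum (hφ : ContDiff ℝ 1 φ) (hc : HasCompactSupport φ)
    (hh : 0 < h) {v w : ℤ → E} {c : E} (hv : ∀ j ∉ K, v j = 0) (hw : ∀ j ∉ K, w j = c)
    {u g : ℝ → E} (hu : ∀ j, ∀ x ∈ cell h j, u x = v j) (hg : ∀ j, ∀ x ∈ cell h j, g x = w j)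
    {t₀ t₁ : ℝ} (ht : t₀ ≤ t₁) :
    ∫ t in t₀..t₁, ∫ x, (fderiv ℝ φ (t, x) (1, 0) • u x + fderiv ℝ φ (t, x) (0, 1) • g x) =
      ∑ j ∈ K, ((∫ x in ((j : ℝ) - 1) * h..(j : ℝ) * h, (φ (t₁, x) - φ (t₀, x))) • v j +
        ((∫ t in t₀..t₁, φ (t, (j : ℝ) * h)) - ∫ t in t₀..t₁, φ (t, ((j : ℝ) - 1) * h)) •
          (w j - c)) := by
  simp_rw [integral_partials_smul_eq_sum hφ hc hh hv hw hu hg]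
  have hcell (j : ℤ) : Continuous
      fun t => ∫ x in ((j : ℝ) - 1) * h..(j : ℝ) * h, fderiv ℝ φ (t, x) (1, 0) :=
    intervalIntegral.continuous_parametric_intervalIntegral_of_continuous'
      (continuous_fderiv_apply_const hφ (1, 0)) _ _
  have hface (y : ℝ) : Continuous fun t => φ (t, y) :=
    hφ.continuous.comp (continuous_id.prodMk continuous_const)
  have hsummand₁ (j : ℤ) : IntervalIntegrable
      (fun t => (∫ x in ((j : ℝ) - 1) * h..(j : ℝ) * h, fderiv ℝ φ (t, x) (1, 0)) • v j)
      volume t₀ t₁ :=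
    ((hcell j).smul continuous_const).intervalIntegrable _ _
  have hsummand₂ (j : ℤ) : IntervalIntegrable
      (fun t => (φ (t, (j : ℝ) * h) - φ (t, ((j : ℝ) - 1) * h)) • (w j - c)) volume t₀ t₁ :=
    (((hface _).sub (hface _)).smul continuous_const).intervalIntegrable _ _
  rw [intervalIntegral.integral_finsetSum fun j _ => (hsummand₁ j).add (hsummand₂ j)]
  refine Finset.sum_congr rfl fun j _ => ?_
  have hj : ((j : ℝ) - 1) * h ≤ (j : ℝ) * h := by nlinarith
  rw [intervalIntegral.integral_add (hsummand₁ j) (hsummand₂ j),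
    intervalIntegral.integral_smul_const, intervalIntegral.integral_smul_const,
    integral_integral_fderiv_fst hφ ht hj,
    intervalIntegral.integral_sub ((hface _).intervalIntegrable _ _)
      ((hface _).intervalIntegrable _ _)]

theorem weak_form_sub_eq_sum (hφ : ContDiff ℝ 1 φ) (hc : HasCompactSupport φ) (hh : 0 < h)
    {τ t₀ : ℝ} (hτ : 0 ≤ τ) {f : E → E} {F : E → E → E} (hcons : ∀ p, F p p = f p)
    {uj : ℤ → E} (hK : ∀ j, (j ∉ K ∨ j + 1 ∉ K) → uj j = 0 ∧ uj (j + 1) = 0)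
    {u u' : ℝ → E} (hu : ∀ j, ∀ x ∈ cell h j, u x = uj j)
    (hu' : ∀ j, ∀ x ∈ cell h j,
      u' x = uj j - (τ / h) • (F (uj j) (uj (j + 1)) - F (uj (j - 1)) (uj j)))
    {a b : ℤ → ℝ}
    (ha : ∀ j, a j = τ / h * ∫ x in ((j : ℝ) - 1) * h..(j : ℝ) * h, φ (t₀ + τ, x))
    (hb : ∀ j, b j = ∫ t in t₀..t₀ + τ, φ (t, (j : ℝ) * h)) :
    (∫ t in t₀..t₀ + τ, ∫ x,
        (fderiv ℝ φ (t, x) (1, 0) • u x + fderiv ℝ φ (t, x) (0, 1) • f (u x))) -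
      ∫ x, (φ (t₀ + τ, x) • u' x - φ (t₀, x) • u x) =
    ∑ j ∈ K, ((a j - b j) • (F (uj j) (uj (j + 1)) - f (uj j)) +
      (a (j + 1) - b j) • (f (uj (j + 1)) - F (uj j) (uj (j + 1)))) := by
  have hv : ∀ j ∉ K, uj j = 0 := fun j hj => (hK j (Or.inl hj)).1
  have hv' : ∀ j ∉ K, uj j - (τ / h) • (F (uj j) (uj (j + 1)) - F (uj (j - 1)) (uj j)) = 0 := by
    intro j hj
    have hprev := (hK (j - 1) (Or.inr (by simpa using hj))).1
    simp [hv j hj, (hK j (Or.inl hj)).2, hprev]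
  have hslice (s : ℝ) : Continuous fun x => φ (s, x) :=
    hφ.continuous.comp (continuous_const.prodMk continuous_id)
  obtain ⟨hint₁, heq₁⟩ := integral_smul_eq_sum_cell hh hv' (hslice (t₀ + τ)) hu'
  obtain ⟨hint₀, heq₀⟩ := integral_smul_eq_sum_cell hh hv (hslice t₀) hu
  rw [integral_integral_partials_smul_eq_sum hφ hc hh hv (w := fun j => f (uj j)) (c := f 0)
      (fun j hj => by simp only [hv j hj]) hu (fun j x hx => by rw [hu j x hx]) (by linarith),
    integral_sub hint₁ hint₀, heq₁, heq₀]
  have hsum := sum_smul_sub_add_smul_sub_eq K a b (fun j => f (uj j) - f 0)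
    (fun j => F (uj j) (uj (j + 1)) - f 0) fun j hj => by simp [(hK j hj).1, (hK j hj).2, hcons]
  simp only [sub_sub_sub_cancel_right] at hsum
  rw [← hsum]
  simp only [← Finset.sum_sub_distrib]
  refine Finset.sum_congr rfl fun j _ => ?_
  rw [ha j, hb j, hb (j - 1), intervalIntegral.integral_sub
    ((hslice _).intervalIntegrable _ _) ((hslice _).intervalIntegrable _ _), sub_add_cancel]
  push_cast
  module

end Scheme

theorem norm_sum_smul_add_smul_le {E : Type*} [SeminormedAddCommGroup E] [NormedSpace ℝ E]
    (K : Finset ℤ) {α β : ℤ → ℝ} (e g : ℤ → E) {C : ℝ} (hα : ∀ j, |α j| ≤ C)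
    (hβ : ∀ j, |β j| ≤ C) :
    ‖∑ j ∈ K, (α j • e j + β j • g j)‖ ≤ C * ∑ j ∈ K, (‖e j‖ + ‖g j‖) := by
  rw [Finset.mul_sum]
  refine (norm_sum_le _ _).trans (Finset.sum_le_sum fun j _ => ?_)
  calc ‖α j • e j + β j • g j‖ ≤ |α j| * ‖e j‖ + |β j| * ‖g j‖ := by
        simpa only [norm_smul, Real.norm_eq_abs] using norm_add_le (α j • e j) (β j • g j)
    _ ≤ C * (‖e j‖ + ‖g j‖) := by
        rw [mul_add]; gcongr <;> [exact hα j; exact hβ j]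

theorem norm_flux_sub_add_norm_sub_flux_le {E : Type*} [SeminormedAddCommGroup E]
    {F : E → E → E} {f : E → E} {L : ℝ}
    (hLip : ∀ a a' b b', ‖F a b - F a' b'‖ ≤ L * (‖a - a'‖ + ‖b - b'‖))
    (hcons : ∀ p, F p p = f p) (a b : E) :
    ‖F a b - f a‖ + ‖f b - F a b‖ ≤ 2 * |L| * ‖b - a‖ := by
  have h₁ := hLip a a b a
  have h₂ := hLip b a b b
  rw [hcons] at h₁ h₂
  simp only [sub_self, norm_zero, zero_add, add_zero] at h₁ h₂
  nlinarith [le_abs_self L, norm_nonneg (b - a)]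

/-- single-time-step weak consistency (WC) estimate for the explicit
finite volume scheme with a consistent Lipschitz numerical flux. -/
theorem stmt3 (n : ℕ)
    (f : EuclideanSpace ℝ (Fin n) → EuclideanSpace ℝ (Fin n))
    (F : EuclideanSpace ℝ (Fin n) → EuclideanSpace ℝ (Fin n) → EuclideanSpace ℝ (Fin n))
    (L : ℝ)
    (hLip : ∀ a a' b b', ‖F a b - F a' b'‖ ≤ L * (‖a - a'‖ + ‖b - b'‖))
    (hcons : ∀ p, F p p = f p) :
    ∃ C > 0, ∀ (τ h : ℝ), 0 < τ → 0 < h → τ ≤ h → ∀ (tn : ℝ)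
      (uj : ℤ → EuclideanSpace ℝ (Fin n)), (Function.support uj).Finite →
      ∀ (u u' : ℝ → EuclideanSpace ℝ (Fin n)),
      (∀ (j : ℤ) (x : ℝ), x ∈ Set.Ioo (((j : ℝ) - 1) * h) ((j : ℝ) * h) → u x = uj j) →
      (∀ (j : ℤ) (x : ℝ), x ∈ Set.Ioo (((j : ℝ) - 1) * h) ((j : ℝ) * h) →
        u' x = uj j - (τ / h) • (F (uj j) (uj (j + 1)) - F (uj (j - 1)) (uj j))) →
      ∀ (φ : ℝ × ℝ → ℝ) (M : ℝ), ContDiff ℝ 1 φ → HasCompactSupport φ →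
      (∀ p, |φ p| ≤ M) →
      (∀ p, |fderiv ℝ φ p (1, 0)| ≤ M) →
      (∀ p, |fderiv ℝ φ p (0, 1)| ≤ M) →
      ‖(∫ t in tn..(tn + τ), ∫ x : ℝ,
            (fderiv ℝ φ (t, x) (1, 0)) • u x + (fderiv ℝ φ (t, x) (0, 1)) • f (u x))
          - ∫ x : ℝ, (φ (tn + τ, x) • u' x - φ (tn, x) • u x)‖
        ≤ C * h * M * τ * ∑' j : ℤ, ‖uj (j + 1) - uj j‖ := by
  refine ⟨4 * |L| + 1, by positivity, ?_⟩
  intro τ h hτ hh hτh tn uj hfin u u' hu hu' φ M hφ hφc _ hM₁ hM₂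
  obtain ⟨K, hK⟩ := exists_finset_of_support_finite hfin
  have hM : 0 ≤ M := (abs_nonneg _).trans (hM₁ 0)
  have hφ' := hφ.differentiable one_ne_zero
  have hS : 0 ≤ h * M * τ * ∑ j ∈ K, ‖uj (j + 1) - uj j‖ :=
    mul_nonneg (by positivity) (Finset.sum_nonneg fun j _ => norm_nonneg _)
  rw [tsum_eq_sum fun j hj => by simp [(hK j (Or.inl hj)).1, (hK j (Or.inl hj)).2],
    weak_form_sub_eq_sum hφ hφc hh hτ.le hcons hK hu hu' (fun _ => rfl) (fun _ => rfl)]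
  calc _ ≤ 2 * M * h * τ * ∑ j ∈ K, (‖F (uj j) (uj (j + 1)) - f (uj j)‖ +
        ‖f (uj (j + 1)) - F (uj j) (uj (j + 1))‖) :=
        norm_sum_smul_add_smul_le K _ _
          (fun j => abs_mul_integral_sub_integral_le hφ' hM₁ hM₂ hτ hτh (by ring)
            ⟨by nlinarith, le_rfl⟩ tn)
          (fun j => abs_mul_integral_sub_integral_le hφ' hM₁ hM₂ hτ hτh (by push_cast; ring)
            ⟨le_of_eq (by push_cast; ring), by push_cast; nlinarith⟩ tn)
    _ ≤ 2 * M * h * τ * ∑ j ∈ K, 2 * |L| * ‖uj (j + 1) - uj j‖ := by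
        gcongr with j
        exact norm_flux_sub_add_norm_sub_flux_le hLip hcons _ _
    _ ≤ (4 * |L| + 1) * h * M * τ * ∑ j ∈ K, ‖uj (j + 1) - uj j‖ := by
        rw [← Finset.mul_sum]
        nlinarith
end

section
/- Let O, Õ ⊆ ℝⁿ be open sets, let η : O → ℝ be twice continuously differentiable such that v := ∇η : O → Õ is a bijection with continuously differentiable inverse U : Õ → O. Let f : O → ℝⁿ and q : O → ℝ be continuously differentiable and satisfy the compatibility condition Dq(x) = Dη(x) ∘ Df(x) for all x ∈ O. Let F : O × O → ℝⁿ be continuously differentiable and define F̃(α,β) := F(U(α), U(β)). Fix a', b' ∈ O with entropy variables a := ∇η(a'), b := ∇η(b'), assume the segment v(s) := a + s(b−a), s ∈ [0,1], lies in Õ, and set γ(s) := U(v(s)). Assume the second-order consistency condition: for every s ∈ [0,1], D₁F(γ(s), b') + D₂F(a', γ(s)) = Df(γ(s)) as linear maps. Then ∫₀¹ ⟨v(s), D₁F̃(v(s), b)(b−a)⟩ ds + ∫₀¹ ⟨v(s), D₂F̃(a, v(s))(b−a)⟩ ds = q(b') − q(a'). In particular, the two consistent numerical entropy fluxes Q^r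 := ∫₀¹ ⟨v(s), D₂F̃(a, v(s))(b−a)⟩ ds + q(a') and Q^l := −∫₀¹ ⟨v(s), D₁F̃(v(s), b)(b−a)⟩ ds + q(b') coincide. -/
/-!
Along the segment `v(s) = a + s (b - a)` in entropy variables, write `γ = U ∘ v`. By the chain
rule the two integrands are `⟪v, D₁F(γ, b') γ'⟫` and `⟪v, D₂F(a', γ) γ'⟫`. Their sum is
`⟪∇η(γ), Df(γ) γ'⟫ = Dη(γ) Df(γ) γ' = Dq(γ) γ'` by second-order consistency and the compatibility
condition, i.e. the derivative of `q ∘ γ`; the fundamental theorem of calculus finishes.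
-/

open scoped RealInnerProductSpace
open Set

section Curry

variable {E₁ E₂ G : Type*} [NormedAddCommGroup E₁] [NormedSpace ℝ E₁]
  [NormedAddCommGroup E₂] [NormedSpace ℝ E₂] [NormedAddCommGroup G] [NormedSpace ℝ G]
  {F : E₁ → E₂ → G} {s : Set E₁} {t : Set E₂} {n : WithTop ℕ∞}

theorem ContDiffOn.curry_left (hF : ContDiffOn ℝ n (fun p : E₁ × E₂ => F p.1 p.2) (s ×ˢ t))
    {y : E₂} (hy : y ∈ t) : ContDiffOn ℝ n (fun x => F x y) s :=
  hF.comp (contDiffOn_id.prodMk contDiffOn_const) fun _ hx => ⟨hx, hy⟩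

theorem ContDiffOn.curry_right (hF : ContDiffOn ℝ n (fun p : E₁ × E₂ => F p.1 p.2) (s ×ˢ t))
    {x : E₁} (hx : x ∈ s) : ContDiffOn ℝ n (fun y => F x y) t :=
  hF.comp (contDiffOn_const.prodMk contDiffOn_id) fun _ hy => ⟨hx, hy⟩

end Curry

section Segment

variable {E G : Type*} [NormedAddCommGroup E] [NormedSpace ℝ E]
  [NormedAddCommGroup G] [NormedSpace ℝ G] {g : E → G} {Ω : Set E} {a b : E}

theorem ContDiffOn.continuousOn_fderiv_segment (hg : ContDiffOn ℝ 1 g Ω) (hΩ : IsOpen Ω)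
    (hseg : ∀ s ∈ Icc (0 : ℝ) 1, a + s • (b - a) ∈ Ω) :
    ContinuousOn (fun s : ℝ => fderiv ℝ g (a + s • (b - a))) (Icc 0 1) :=
  (hg.continuousOn_fderiv_of_isOpen hΩ le_rfl).comp (by fun_prop) hseg

theorem ContDiffOn.integral_fderiv_segment [CompleteSpace G] (hg : ContDiffOn ℝ 1 g Ω)
    (hΩ : IsOpen Ω) (hseg : ∀ s ∈ Icc (0 : ℝ) 1, a + s • (b - a) ∈ Ω) :
    ∫ s in (0 : ℝ)..1, fderiv ℝ g (a + s • (b - a)) (b - a) = g b - g a := by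
  have hderiv : ∀ s ∈ uIcc (0 : ℝ) 1,
      HasDerivAt (fun t : ℝ => g (a + t • (b - a))) (fderiv ℝ g (a + s • (b - a)) (b - a)) s := by
    intro s hs
    rw [uIcc_of_le zero_le_one] at hs
    have hline : HasDerivAt (fun t : ℝ => a + t • (b - a)) (b - a) s := by
      simpa using ((hasDerivAt_id s).smul_const (b - a)).const_add a
    exact ((hg.contDiffAt (hΩ.mem_nhds (hseg s hs))).differentiableAt one_ne_zero).hasFDerivAt
      |>.comp_hasDerivAt s hline
  have hint : IntervalIntegrable (fun s : ℝ => fderiv ℝ g (a + s • (b - a)) (b - a))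
      MeasureTheory.volume 0 1 :=
    ((hg.continuousOn_fderiv_segment hΩ hseg).clm_apply
      continuousOn_const).intervalIntegrable_of_Icc zero_le_one
  rw [intervalIntegral.integral_eq_sub_of_hasDerivAt hderiv hint]
  simp

end Segment

section EntropyVariables

variable {E : Type*} [NormedAddCommGroup E] [InnerProductSpace ℝ E]

theorem ContDiffOn.intervalIntegrable_inner_fderiv_segment {g : E → E} {Ω : Set E} {a b : E}
    (hg : ContDiffOn ℝ 1 g Ω) (hΩ : IsOpen Ω)
    (hseg : ∀ s ∈ Icc (0 : ℝ) 1, a + s • (b - a) ∈ Ω) :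
    IntervalIntegrable
      (fun s : ℝ => ⟪a + s • (b - a), fderiv ℝ g (a + s • (b - a)) (b - a)⟫)
      MeasureTheory.volume 0 1 :=
  ((by fun_prop : Continuous fun s : ℝ => a + s • (b - a)).continuousOn.inner
    ((hg.continuousOn_fderiv_segment hΩ hseg).clm_apply continuousOn_const)).intervalIntegrable_of_Icc
    zero_le_one

theorem inner_fderiv_comp_add_inner_fderiv_comp [CompleteSpace E] {η q : E → ℝ}
    {f g₁ g₂ U : E → E} {x : E} (hg₁ : DifferentiableAt ℝ g₁ (U x))
    (hg₂ : DifferentiableAt ℝ g₂ (U x)) (hq : DifferentiableAt ℝ q (U x))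
    (hU : DifferentiableAt ℝ U x) (hx : gradient η (U x) = x)
    (hsum : fderiv ℝ g₁ (U x) + fderiv ℝ g₂ (U x) = fderiv ℝ f (U x))
    (hcompat : fderiv ℝ q (U x) = (fderiv ℝ η (U x)).comp (fderiv ℝ f (U x))) (u : E) :
    ⟪x, fderiv ℝ (fun z => g₁ (U z)) x u⟫ + ⟪x, fderiv ℝ (fun z => g₂ (U z)) x u⟫
      = fderiv ℝ (fun z => q (U z)) x u := by
  rw [fderiv_fun_comp x hg₁ hU, fderiv_fun_comp x hg₂ hU, fderiv_fun_comp x hq hU, ← inner_add_right,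
    ← add_apply, ← ContinuousLinearMap.add_comp, hsum, hcompat]
  simp only [ContinuousLinearMap.comp_apply]
  rw [← inner_gradient_left (f := η), hx]

end EntropyVariables

theorem stmt9_general (n : ℕ)
    (O Ot : Set (EuclideanSpace ℝ (Fin n))) (hO : IsOpen O) (hOt : IsOpen Ot)
    (η : EuclideanSpace ℝ (Fin n) → ℝ)
    (U : EuclideanSpace ℝ (Fin n) → EuclideanSpace ℝ (Fin n))
    (hU : ContDiffOn ℝ 1 U Ot)
    (hUmap : ∀ y ∈ Ot, U y ∈ O)
    (hlinv : ∀ x ∈ O, U (gradient η x) = x)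
    (hrinv : ∀ y ∈ Ot, gradient η (U y) = y)
    (f : EuclideanSpace ℝ (Fin n) → EuclideanSpace ℝ (Fin n))
    (q : EuclideanSpace ℝ (Fin n) → ℝ) (hq : ContDiffOn ℝ 1 q O)
    (hcompat : ∀ x ∈ O, fderiv ℝ q x = (fderiv ℝ η x).comp (fderiv ℝ f x))
    (F : EuclideanSpace ℝ (Fin n) → EuclideanSpace ℝ (Fin n) → EuclideanSpace ℝ (Fin n))
    (hF : ContDiffOn ℝ 1 (fun p : EuclideanSpace ℝ (Fin n) × EuclideanSpace ℝ (Fin n) =>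
      F p.1 p.2) (O ×ˢ O))
    (a' b' : EuclideanSpace ℝ (Fin n)) (ha' : a' ∈ O) (hb' : b' ∈ O)
    (a b : EuclideanSpace ℝ (Fin n)) (ha : a = gradient η a') (hb : b = gradient η b')
    (hseg : ∀ s ∈ Set.Icc (0:ℝ) 1, a + s • (b - a) ∈ Ot)
    (γ : ℝ → EuclideanSpace ℝ (Fin n)) (hγ : ∀ s, γ s = U (a + s • (b - a)))
    (hsoc : ∀ s ∈ Set.Icc (0:ℝ) 1,
      fderiv ℝ (fun z => F z b') (γ s) + fderiv ℝ (fun z => F a' z) (γ s)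
        = fderiv ℝ f (γ s)) :
    (∫ s in (0:ℝ)..1,
        ⟪a + s • (b - a), fderiv ℝ (fun z => F (U z) (U b)) (a + s • (b - a)) (b - a)⟫)
      + (∫ s in (0:ℝ)..1,
        ⟪a + s • (b - a), fderiv ℝ (fun z => F (U a) (U z)) (a + s • (b - a)) (b - a)⟫)
      = q b' - q a' := by
  have hUa : U a = a' := ha ▸ hlinv a' ha'
  have hUb : U b = b' := hb ▸ hlinv b' hb'
  have hF₁ : ContDiffOn ℝ 1 (fun z => F z b') O := hF.curry_left hb'
  have hF₂ : ContDiffOn ℝ 1 (fun z => F a' z) O := hF.curry_right ha'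
  have hF₁U : ContDiffOn ℝ 1 (fun z => F (U z) (U b)) Ot := hUb ▸ hF₁.comp hU hUmap
  have hF₂U : ContDiffOn ℝ 1 (fun z => F (U a) (U z)) Ot := hUa ▸ hF₂.comp hU hUmap
  have hqU : ContDiffOn ℝ 1 (fun z => q (U z)) Ot := hq.comp hU hUmap
  have hpoint : ∀ s ∈ uIcc (0 : ℝ) 1,
      ⟪a + s • (b - a), fderiv ℝ (fun z => F (U z) (U b)) (a + s • (b - a)) (b - a)⟫
        + ⟪a + s • (b - a), fderiv ℝ (fun z => F (U a) (U z)) (a + s • (b - a)) (b - a)⟫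
      = fderiv ℝ (fun z => q (U z)) (a + s • (b - a)) (b - a) := by
    intro s hs
    rw [uIcc_of_le zero_le_one] at hs
    have hx := hseg s hs
    have hy : U (a + s • (b - a)) ∈ O := hUmap _ hx
    rw [hUa, hUb]
    exact inner_fderiv_comp_add_inner_fderiv_comp
      ((hF₁.differentiableOn one_ne_zero).differentiableAt (hO.mem_nhds hy))
      ((hF₂.differentiableOn one_ne_zero).differentiableAt (hO.mem_nhds hy))
      ((hq.differentiableOn one_ne_zero).differentiableAt (hO.mem_nhds hy))
      ((hU.differentiableOn one_ne_zero).differentiableAt (hOt.mem_nhds hx))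
      (hrinv _ hx) (hγ s ▸ hsoc s hs) (hcompat _ hy) (b - a)
  rw [← intervalIntegral.integral_add (hF₁U.intervalIntegrable_inner_fderiv_segment hOt hseg)
      (hF₂U.intervalIntegrable_inner_fderiv_segment hOt hseg),
    intervalIntegral.integral_congr hpoint, hqU.integral_fderiv_segment hOt hseg, hUa, hUb]

/-- under second-order consistency of the numerical flux, the two
consistent numerical entropy fluxes coincide:
`∫₀¹ ⟨v(s), D₁F̃(v(s),b)(b−a)⟩ ds + ∫₀¹ ⟨v(s), D₂F̃(a,v(s))(b−a)⟩ ds = q(b') − q(a')`,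
i.e. `Q^r = Q^l`. -/
theorem stmt9 (n : ℕ)
    (O Ot : Set (EuclideanSpace ℝ (Fin n))) (hO : IsOpen O) (hOt : IsOpen Ot)
    (η : EuclideanSpace ℝ (Fin n) → ℝ) (hη : ContDiffOn ℝ 2 η O)
    (U : EuclideanSpace ℝ (Fin n) → EuclideanSpace ℝ (Fin n))
    (hU : ContDiffOn ℝ 1 U Ot)
    (hmap : ∀ x ∈ O, gradient η x ∈ Ot)
    (hUmap : ∀ y ∈ Ot, U y ∈ O)
    (hlinv : ∀ x ∈ O, U (gradient η x) = x)
    (hrinv : ∀ y ∈ Ot, gradient η (U y) = y)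
    (f : EuclideanSpace ℝ (Fin n) → EuclideanSpace ℝ (Fin n)) (hf : ContDiffOn ℝ 1 f O)
    (q : EuclideanSpace ℝ (Fin n) → ℝ) (hq : ContDiffOn ℝ 1 q O)
    (hcompat : ∀ x ∈ O, fderiv ℝ q x = (fderiv ℝ η x).comp (fderiv ℝ f x))
    (F : EuclideanSpace ℝ (Fin n) → EuclideanSpace ℝ (Fin n) → EuclideanSpace ℝ (Fin n))
    (hF : ContDiffOn ℝ 1 (fun p : EuclideanSpace ℝ (Fin n) × EuclideanSpace ℝ (Fin n) =>
      F p.1 p.2) (O ×ˢ O))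
    (a' b' : EuclideanSpace ℝ (Fin n)) (ha' : a' ∈ O) (hb' : b' ∈ O)
    (a b : EuclideanSpace ℝ (Fin n)) (ha : a = gradient η a') (hb : b = gradient η b')
    (hseg : ∀ s ∈ Set.Icc (0:ℝ) 1, a + s • (b - a) ∈ Ot)
    (γ : ℝ → EuclideanSpace ℝ (Fin n)) (hγ : ∀ s, γ s = U (a + s • (b - a)))
    (hsoc : ∀ s ∈ Set.Icc (0:ℝ) 1,
      fderiv ℝ (fun z => F z b') (γ s) + fderiv ℝ (fun z => F a' z) (γ s)
        = fderiv ℝ f (γ s)) :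
    (∫ s in (0:ℝ)..1,
        ⟪a + s • (b - a), fderiv ℝ (fun z => F (U z) (U b)) (a + s • (b - a)) (b - a)⟫)
      + (∫ s in (0:ℝ)..1,
        ⟪a + s • (b - a), fderiv ℝ (fun z => F (U a) (U z)) (a + s • (b - a)) (b - a)⟫)
      = q b' - q a' :=
  stmt9_general n O Ot hO hOt η U hU hUmap hlinv hrinv f q hq hcompat F hF a' b' ha' hb' a b ha hb
    hseg γ hγ hsoc
end

section
/- Let F : ℝⁿ × ℝⁿ → ℝⁿ be continuously differentiable and consistent with f : ℝⁿ → ℝⁿ, i.e. F(p,p) = f(p) for all p. Then for all a, b ∈ ℝⁿ, writing γ(s) := a + s(b−a), one has f(b) − f(a) = ∫₀¹ (D₁F(γ(s), b) + D₂F(a, γ(s)))(b − a) ds. -/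
/-!
Split `f b - f a = F b b - F a a` as `(F b b - F a b) + (F a b - F a a)`: each difference moves
only one argument of `F` along the segment from `a` to `b`, so by the fundamental theorem of
calculus it is the integral of the corresponding partial derivative applied to `b - a`.
-/

section

variable {E G : Type*} [NormedAddCommGroup E] [NormedSpace ℝ E]
  [NormedAddCommGroup G] [NormedSpace ℝ G]

theorem ContDiff.continuous_fderiv_segment_apply {g : E → G} (hg : ContDiff ℝ 1 g) (a b : E) :
    Continuous fun s : ℝ => fderiv ℝ g (a + s • (b - a)) (b - a) :=
  ((hg.continuous_fderiv one_ne_zero).comp (by fun_prop)).clm_apply continuous_const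

theorem ContDiff.sub_eq_integral_fderiv_segment [CompleteSpace G] {g : E → G}
    (hg : ContDiff ℝ 1 g) (a b : E) :
    g b - g a = ∫ s in (0:ℝ)..1, fderiv ℝ g (a + s • (b - a)) (b - a) := by
  have hγ : ∀ s : ℝ, HasDerivAt (fun s : ℝ => a + s • (b - a)) (b - a) s := fun s => by
    simpa using ((hasDerivAt_id s).smul_const (b - a)).const_add a
  have hderiv : ∀ s : ℝ, HasDerivAt (fun s : ℝ => g (a + s • (b - a)))
      (fderiv ℝ g (a + s • (b - a)) (b - a)) s := fun s =>
    ((hg.differentiable one_ne_zero _).hasFDerivAt).comp_hasDerivAt s (hγ s)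
  rw [intervalIntegral.integral_eq_sub_of_hasDerivAt (fun s _ => hderiv s)
    ((hg.continuous_fderiv_segment_apply a b).intervalIntegrable 0 1)]
  simp

theorem sub_eq_integral_partial_fderiv_segment [CompleteSpace G] {f : E → G} {F : E → E → G}
    {a b : E}
    (hF₁ : ContDiff ℝ 1 fun z => F z b) (hF₂ : ContDiff ℝ 1 fun z => F a z)
    (ha : F a a = f a) (hb : F b b = f b) :
    f b - f a = ∫ s in (0:ℝ)..1,
      (fderiv ℝ (fun z => F z b) (a + s • (b - a))
        + fderiv ℝ (fun z => F a z) (a + s • (b - a))) (b - a) := by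
  simp only [add_apply]
  rw [intervalIntegral.integral_add
      ((hF₁.continuous_fderiv_segment_apply a b).intervalIntegrable 0 1)
      ((hF₂.continuous_fderiv_segment_apply a b).intervalIntegrable 0 1),
    ← hF₁.sub_eq_integral_fderiv_segment, ← hF₂.sub_eq_integral_fderiv_segment, ← ha, ← hb]
  abel

end

/-- for a continuously differentiable numerical flux `F` consistent with
`f`, along `γ(s) = a + s(b−a)`:
`f(b) − f(a) = ∫₀¹ (D₁F(γ(s),b) + D₂F(a,γ(s)))(b−a) ds`. -/
theorem stmt13 (n : ℕ)
    (f : EuclideanSpace ℝ (Fin n) → EuclideanSpace ℝ (Fin n))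
    (F : EuclideanSpace ℝ (Fin n) → EuclideanSpace ℝ (Fin n) → EuclideanSpace ℝ (Fin n))
    (hF : ContDiff ℝ 1 (fun p : EuclideanSpace ℝ (Fin n) × EuclideanSpace ℝ (Fin n) =>
      F p.1 p.2))
    (hcons : ∀ p, F p p = f p)
    (a b : EuclideanSpace ℝ (Fin n)) :
    f b - f a
      = ∫ s in (0:ℝ)..1,
          (fderiv ℝ (fun z => F z b) (a + s • (b - a))
            + fderiv ℝ (fun z => F a z) (a + s • (b - a))) (b - a) :=
  sub_eq_integral_partial_fderiv_segment (hF.comp (contDiff_id.prodMk contDiff_const))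
    (hF.comp (contDiff_const.prodMk contDiff_id)) (hcons a) (hcons b)
end
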